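/- arXiv:2501.01696 — 2 statements merged into one kernel-verified Lean document; each statement's English description precedes it below -/
import Mathlib

section
/- (Cross-term bound) Let Δ_L ∈ ℝ^{n₁×r}, Δ_R ∈ ℝ^{n₂×r}, and let G be an r×r positive definite diagonal matrix. Then ‖Δ_L·Δ_Rᴴ‖_F ≤ (1/2)·max(‖Δ_L G^{−1/2}‖, ‖Δ_R G^{−1/2}‖)·(‖Δ_L G^{1/2}‖_F + ‖Δ_R G^{1/2}‖_F), where ‖·‖ denotes the spectral norm. -/
open Matrix BigOperators

/-- Frobenius norm of a real matrix. -/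
noncomputable def frob {m n : Type*} [Fintype m] [Fintype n] (A : Matrix m n ℝ) : ℝ :=
  Real.sqrt (∑ i, ∑ j, (A i j) ^ 2)

/-- Spectral norm (largest singular value) of a real matrix. -/
noncomputable def specNorm {m n : Type*} [Fintype m] [Fintype n] [DecidableEq n]
    (A : Matrix m n ℝ) : ℝ :=
  Real.sqrt (⨆ i, (Matrix.isHermitian_conjTranspose_mul_self A).eigenvalues i)

/-- Smallest singular value (√(λ_min(AᴴA)) convention). -/
noncomputable def sigmaMin {m n : Type*} [Fintype m] [Fintype n] [DecidableEq n]
    (A : Matrix m n ℝ) : ℝ :=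
  Real.sqrt (⨅ i, (Matrix.isHermitian_conjTranspose_mul_self A).eigenvalues i)

/-- Maximum Euclidean row norm ‖·‖₂,∞. -/
noncomputable def rowTwoInf {m n : Type*} [Fintype m] [Fintype n] (A : Matrix m n ℝ) : ℝ :=
  ⨆ i, Real.sqrt (∑ j, (A i j) ^ 2)

/-- Entrywise sup norm ‖·‖∞. -/
noncomputable def entryInf {m n : Type*} [Fintype m] [Fintype n] (A : Matrix m n ℝ) : ℝ :=
  ⨆ i, ⨆ j, |A i j|

/-! Writing `g` for the diagonal of `G^{1/2}`, the product `Δ_L Δ_Rᵀ` factors both as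
`(Δ_L G^{1/2})(Δ_R G^{-1/2})ᵀ` and as `(Δ_L G^{-1/2})(Δ_R G^{1/2})ᵀ`. Applying
`‖A Bᵀ‖_F ≤ ‖A‖_F ‖B‖` to each factorisation bounds `‖Δ_L Δ_Rᵀ‖_F` by `s ‖Δ_L G^{1/2}‖_F`
and by `s ‖Δ_R G^{1/2}‖_F`, with `s` the larger spectral norm; the claim is their average.
The Frobenius–spectral inequality holds row by row: `‖B x‖² = xᵀ BᵀB x ≤ λ_max(BᵀB) ‖x‖²`,
read off in an orthonormal eigenbasis of `BᵀB`. -/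

lemma frob_nonneg {m n : Type*} [Fintype m] [Fintype n] (A : Matrix m n ℝ) : 0 ≤ frob A :=
  Real.sqrt_nonneg _

lemma specNorm_nonneg {m n : Type*} [Fintype m] [Fintype n] [DecidableEq n]
    (A : Matrix m n ℝ) : 0 ≤ specNorm A :=
  Real.sqrt_nonneg _

lemma frob_transpose {m n : Type*} [Fintype m] [Fintype n] (A : Matrix m n ℝ) :
    frob Aᵀ = frob A := by
  rw [frob, frob, Finset.sum_comm]
  rfl

lemma frob_eq_sqrt_sum_dotProduct {m n : Type*} [Fintype m] [Fintype n] (A : Matrix m n ℝ) :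
    frob A = √(∑ i, A i ⬝ᵥ A i) := by
  simp only [frob, dotProduct, sq]

lemma Matrix.IsHermitian.dotProduct_mulVec_le_iSup_eigenvalues {n : Type*} [Fintype n]
    [DecidableEq n] {A : Matrix n n ℝ} (hA : A.IsHermitian) (x : n → ℝ) :
    x ⬝ᵥ (A *ᵥ x) ≤ (⨆ i, hA.eigenvalues i) * (x ⬝ᵥ x) := by
  set ev := hA.eigenvalues
  set U : Matrix n n ℝ := (hA.eigenvectorUnitary : Matrix n n ℝ)
  set y := Uᵀ *ᵥ x
  have hUUt : U * Uᵀ = 1 := mem_unitaryGroup_iff.mp hA.eigenvectorUnitary.2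
  have hspec : A = U * diagonal ev * Uᵀ := by
    simpa [Unitary.conjStarAlgAut_apply, star_eq_conjTranspose] using hA.spectral_theorem
  have hquad : x ⬝ᵥ (A *ᵥ x) = ∑ i, ev i * y i ^ 2 := by
    rw [hspec, ← mulVec_mulVec, ← mulVec_mulVec, dotProduct_mulVec x U, ← mulVec_transpose]
    simp only [dotProduct, mulVec_diagonal, y]
    exact Finset.sum_congr rfl fun i _ => by ring
  have hnorm : x ⬝ᵥ x = ∑ i, y i ^ 2 := by
    nth_rewrite 2 [← one_mulVec x]
    rw [← hUUt, ← mulVec_mulVec, dotProduct_mulVec, ← mulVec_transpose]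
    simp only [dotProduct, sq, y]
  have hle : ∀ i, ev i ≤ ⨆ i, ev i :=
    le_ciSup (Set.finite_range _).bddAbove
  calc x ⬝ᵥ (A *ᵥ x) = ∑ i, ev i * y i ^ 2 := hquad
    _ ≤ ∑ i, (⨆ i, ev i) * y i ^ 2 :=
      Finset.sum_le_sum fun i _ => mul_le_mul_of_nonneg_right (hle i) (sq_nonneg _)
    _ = (⨆ i, ev i) * (x ⬝ᵥ x) := by rw [hnorm, Finset.mul_sum]

lemma dotProduct_mulVec_self_le_specNorm_sq {m n : Type*} [Fintype m] [Fintype n] [DecidableEq n]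
    (B : Matrix m n ℝ) (x : n → ℝ) :
    (B *ᵥ x) ⬝ᵥ (B *ᵥ x) ≤ specNorm B ^ 2 * (x ⬝ᵥ x) := by
  have hB := isHermitian_conjTranspose_mul_self B
  calc (B *ᵥ x) ⬝ᵥ (B *ᵥ x) = x ⬝ᵥ ((Bᴴ * B) *ᵥ x) := by
        rw [conjTranspose_eq_transpose_of_trivial, ← mulVec_mulVec, dotProduct_mulVec x,
          vecMul_transpose]
    _ ≤ (⨆ i, hB.eigenvalues i) * (x ⬝ᵥ x) := hB.dotProduct_mulVec_le_iSup_eigenvalues x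
    _ = specNorm B ^ 2 * (x ⬝ᵥ x) := by
        rw [specNorm, Real.sq_sqrt (Real.iSup_nonneg (eigenvalues_conjTranspose_mul_self_nonneg B))]

lemma frob_mul_transpose_le {l m n : Type*} [Fintype l] [Fintype m] [Fintype n] [DecidableEq n]
    (M : Matrix l n ℝ) (B : Matrix m n ℝ) :
    frob (M * Bᵀ) ≤ frob M * specNorm B := by
  have hrow : ∀ i, (M * Bᵀ) i = B *ᵥ M i := fun i => by
    ext j
    simp only [mul_apply, transpose_apply, mulVec, dotProduct, mul_comm]
  have hsum : ∑ i, (M * Bᵀ) i ⬝ᵥ (M * Bᵀ) i ≤ specNorm B ^ 2 * ∑ i, M i ⬝ᵥ M i := by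
    rw [Finset.mul_sum]
    exact Finset.sum_le_sum fun i _ => hrow i ▸ dotProduct_mulVec_self_le_specNorm_sq B (M i)
  rw [frob_eq_sqrt_sum_dotProduct, frob_eq_sqrt_sum_dotProduct, mul_comm,
    ← Real.sqrt_sq (specNorm_nonneg B), ← Real.sqrt_mul (sq_nonneg _)]
  exact Real.sqrt_le_sqrt hsum

lemma mul_diagonal_mul_transpose_mul_diagonal {l m n : Type*} [Fintype n] [DecidableEq n]
    (A : Matrix l n ℝ) (B : Matrix m n ℝ) {d e : n → ℝ} (hde : ∀ i, d i * e i = 1) :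
    (A * diagonal d) * (B * diagonal e)ᵀ = A * Bᵀ := by
  rw [transpose_mul, diagonal_transpose, Matrix.mul_assoc, ← Matrix.mul_assoc (diagonal d),
    diagonal_mul_diagonal, funext hde, diagonal_one, Matrix.one_mul]

theorem stmt_10 {n₁ n₂ r : Type*} [Fintype n₁] [Fintype n₂] [Fintype r] [DecidableEq r]
    (ΔL : Matrix n₁ r ℝ) (ΔR : Matrix n₂ r ℝ) (g : r → ℝ) (hg : ∀ i, 0 < g i) :
    frob (ΔL * ΔRᵀ) ≤
      (1 / 2) * max (specNorm (ΔL * Matrix.diagonal (fun i => (g i)⁻¹)))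
                    (specNorm (ΔR * Matrix.diagonal (fun i => (g i)⁻¹))) *
      (frob (ΔL * Matrix.diagonal g) + frob (ΔR * Matrix.diagonal g)) := by
  have hg_inv : ∀ i, g i * (g i)⁻¹ = 1 := fun i => mul_inv_cancel₀ (hg i).ne'
  set s := max (specNorm (ΔL * diagonal fun i => (g i)⁻¹))
    (specNorm (ΔR * diagonal fun i => (g i)⁻¹))
  have hL : frob (ΔL * ΔRᵀ) ≤ frob (ΔL * diagonal g) * s := by
    rw [← mul_diagonal_mul_transpose_mul_diagonal ΔL ΔR hg_inv]
    exact (frob_mul_transpose_le _ _).trans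
      (mul_le_mul_of_nonneg_left (le_max_right _ _) (frob_nonneg _))
  have hR : frob (ΔL * ΔRᵀ) ≤ frob (ΔR * diagonal g) * s := by
    rw [← frob_transpose, transpose_mul, transpose_transpose,
      ← mul_diagonal_mul_transpose_mul_diagonal ΔR ΔL hg_inv]
    exact (frob_mul_transpose_le _ _).trans
      (mul_le_mul_of_nonneg_left (le_max_left _ _) (frob_nonneg _))
  linarith
end

section
/- (Optimal alignment criterion) Let L ∈ ℝ^{n₁×r}, R ∈ ℝ^{n₂×r}, L_⋆ ∈ ℝ^{n₁×r}, R_⋆ ∈ ℝ^{n₂×r}, and G ∈ ℝ^{r×r} positive definite diagonal. Suppose Q ∈ GL(r) minimizes f(Q) = ‖(L Q − L_⋆) G^{1/2}‖_F² + ‖(R Q^{−H} − R_⋆) G^{1/2}‖_F² over invertible Q. Then Q satisfies the first-order condition (L Q)ᴴ(L Q − L_⋆) G = G (R Q^{−H} − R_⋆)ᴴ (R Q^{−H}). -/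
open Matrix BigOperators

section aux
attribute [local instance] Matrix.linftyOpNormedRing Matrix.linftyOpNormedAlgebra

variable {r : Type*} [Fintype r] [DecidableEq r]

lemma inv_hasDerivAt' (Q E : Matrix r r ℝ) (hQ : IsUnit Q) :
    HasDerivAt (fun t : ℝ => (Q + t • E)⁻¹) (-(Q⁻¹ * E * Q⁻¹)) 0 := by
  have hline : HasDerivAt (fun t : ℝ => Q + t • E) E 0 := by
    have := ((hasDerivAt_id (0:ℝ)).smul_const E).const_add Q
    simp only [one_smul] at this
    exact this
  have h1 : HasFDerivAt Ring.inverse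
      (-ContinuousLinearMap.mulLeftRight ℝ _ (↑hQ.unit⁻¹) (↑hQ.unit⁻¹)) (Q + (0:ℝ) • E) := by
    simpa using hasFDerivAt_ringInverse (𝕜 := ℝ) hQ.unit
  have h2 := h1.comp_hasDerivAt 0 hline
  have h3 : ∀ t : ℝ, (Q + t • E)⁻¹ = Ring.inverse (Q + t • E) := fun t =>
    Matrix.nonsing_inv_eq_ringInverse _
  have : HasDerivAt (fun t : ℝ => (Q + t • E)⁻¹)
      ((-ContinuousLinearMap.mulLeftRight ℝ _ (↑hQ.unit⁻¹) (↑hQ.unit⁻¹)) E) 0 := by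
    rw [show (fun t : ℝ => (Q + t • E)⁻¹) = Ring.inverse ∘ fun t => Q + t • E from funext h3]
    exact h2
  convert this using 1
  simp [ContinuousLinearMap.mulLeftRight_apply, Matrix.coe_units_inv, mul_assoc]

def entryLM (p q : r) : Matrix r r ℝ →ₗ[ℝ] ℝ where
  toFun M := M p q
  map_add' _ _ := rfl
  map_smul' _ _ := rfl

lemma inv_entry_hasDerivAt (Q E : Matrix r r ℝ) (hQ : IsUnit Q) (p q : r) :
    HasDerivAt (fun t : ℝ => (Q + t • E)⁻¹ p q) ((-(Q⁻¹ * E * Q⁻¹)) p q) 0 :=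
  (LinearMap.toContinuousLinearMap (entryLM p q)).hasFDerivAt.comp_hasDerivAt 0
    (inv_hasDerivAt' Q E hQ)

end aux

lemma frob_sq {m n : Type*} [Fintype m] [Fintype n] (A : Matrix m n ℝ) :
    frob A ^ 2 = ∑ i, ∑ j, (A i j) ^ 2 :=
  Real.sq_sqrt (Finset.sum_nonneg fun _ _ => Finset.sum_nonneg fun _ _ => sq_nonneg _)

theorem stmt_15 {n₁ n₂ r : Type*} [Fintype n₁] [Fintype n₂] [Fintype r] [DecidableEq r]
    (L Ls : Matrix n₁ r ℝ) (R Rs : Matrix n₂ r ℝ) (g : r → ℝ) (hg : ∀ i, 0 < g i)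
    (Q : Matrix r r ℝ) (hQ : IsUnit Q)
    (hmin : ∀ Q' : Matrix r r ℝ, IsUnit Q' →
      frob ((L * Q - Ls) * Matrix.diagonal g) ^ 2 +
        frob ((R * (Q⁻¹)ᵀ - Rs) * Matrix.diagonal g) ^ 2 ≤
      frob ((L * Q' - Ls) * Matrix.diagonal g) ^ 2 +
        frob ((R * (Q'⁻¹)ᵀ - Rs) * Matrix.diagonal g) ^ 2) :
    (L * Q)ᵀ * (L * Q - Ls) * Matrix.diagonal (fun i => g i ^ 2) =
      Matrix.diagonal (fun i => g i ^ 2) * (R * (Q⁻¹)ᵀ - Rs)ᵀ * (R * (Q⁻¹)ᵀ) := by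
  have hC : Lᵀ * (L * Q - Ls) * Matrix.diagonal (fun i => g i ^ 2) =
      (Q⁻¹)ᵀ * (Matrix.diagonal (fun i => g i ^ 2) * (R * (Q⁻¹)ᵀ - Rs)ᵀ * (R * (Q⁻¹)ᵀ)) := by
    ext a b
    set E : Matrix r r ℝ := Matrix.single a b (1:ℝ) with hE
    set N' : Matrix r r ℝ := -(Q⁻¹ * E * Q⁻¹) with hN'
    set φ : ℝ → ℝ := fun t =>
      (∑ i, ∑ j, (((L * (Q + t • E) - Ls) * Matrix.diagonal g) i j) ^ 2) +
      (∑ i, ∑ j, (((R * ((Q + t • E)⁻¹)ᵀ - Rs) * Matrix.diagonal g) i j) ^ 2) with hφ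
    have h0 : Q + (0:ℝ) • E = Q := by simp
    -- local min
    have hlocmin : IsLocalMin φ 0 := by
      have hsm : Continuous fun t : ℝ => Q + t • E :=
        continuous_const.add (continuous_id.smul continuous_const)
      have hdet : Continuous fun t : ℝ => (Q + t • E).det := hsm.matrix_det
      have hd0 : Q.det ≠ 0 := by
        have := (Matrix.isUnit_iff_isUnit_det Q).mp hQ
        exact isUnit_iff_ne_zero.mp this
      have hev : ∀ᶠ t : ℝ in nhds 0, IsUnit (Q + t • E) := by
        have ht : Filter.Tendsto (fun t : ℝ => (Q + t • E).det) (nhds 0) (nhds Q.det) := by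
          simpa [h0] using hdet.tendsto 0
        filter_upwards [ht.eventually_ne hd0] with t htne
        exact (Matrix.isUnit_iff_isUnit_det _).mpr (isUnit_iff_ne_zero.mpr htne)
      filter_upwards [hev] with t ht
      have := hmin (Q + t • E) ht
      simpa [hφ, h0, frob_sq] using this
    -- derivative of φ at 0
    have hderiv : HasDerivAt φ
        ((∑ i, ∑ j, 2 * (((L * Q - Ls) * Matrix.diagonal g) i j) *
            (((L * E) * Matrix.diagonal g) i j)) +
         (∑ i, ∑ j, 2 * (((R * (Q⁻¹)ᵀ - Rs) * Matrix.diagonal g) i j) *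
            (((R * N'ᵀ) * Matrix.diagonal g) i j))) 0 := by
      apply HasDerivAt.add
      · apply HasDerivAt.fun_sum; intro i _
        apply HasDerivAt.fun_sum; intro j _
        have hAff : ∀ t : ℝ, (L * (Q + t • E) - Ls) * Matrix.diagonal g
            = (L * Q - Ls) * Matrix.diagonal g + t • ((L * E) * Matrix.diagonal g) := by
          intro t
          rw [Matrix.mul_add, Matrix.mul_smul, add_sub_right_comm, Matrix.add_mul, Matrix.smul_mul]
        have key : ∀ t : ℝ, ((L * (Q + t • E) - Ls) * Matrix.diagonal g) i j
            = ((L * Q - Ls) * Matrix.diagonal g) i j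
              + t * (((L * E) * Matrix.diagonal g) i j) := by
          intro t; rw [hAff t]; simp
        have h1 : HasDerivAt (fun t : ℝ => ((L * (Q + t • E) - Ls) * Matrix.diagonal g) i j)
            (((L * E) * Matrix.diagonal g) i j) 0 := by
          simp only [key]
          simpa using ((hasDerivAt_id (0:ℝ)).mul_const
            (((L * E) * Matrix.diagonal g) i j)).const_add
            (((L * Q - Ls) * Matrix.diagonal g) i j)
        have h2 := h1.pow 2
        refine h2.congr_deriv ?_
        rw [h0]
        push_cast
        ring
      · apply HasDerivAt.fun_sum; intro i _
        apply HasDerivAt.fun_sum; intro j _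
        have key : ∀ M : Matrix r r ℝ, ((R * Mᵀ - Rs) * Matrix.diagonal g) i j
            = (∑ k, R i k * M j k - Rs i j) * g j := by
          intro M
          rw [Matrix.mul_diagonal]
          simp [Matrix.sub_apply, Matrix.mul_apply]
        have h1 : HasDerivAt
            (fun t : ℝ => ((R * ((Q + t • E)⁻¹)ᵀ - Rs) * Matrix.diagonal g) i j)
            (((R * N'ᵀ) * Matrix.diagonal g) i j) 0 := by
          simp only [key]
          have hsum : HasDerivAt (fun t : ℝ => ∑ k, R i k * (Q + t • E)⁻¹ j k)
              (∑ k, R i k * N' j k) 0 :=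
            HasDerivAt.fun_sum fun k _ => HasDerivAt.const_mul _ (by
              simpa [hN'] using inv_entry_hasDerivAt Q E hQ j k)
          have h2 := (hsum.sub_const (Rs i j)).mul_const (g j)
          refine h2.congr_deriv ?_
          rw [Matrix.mul_diagonal]
          simp [Matrix.mul_apply, Finset.sum_mul]
        have h2 := h1.pow 2
        refine h2.congr_deriv ?_
        rw [h0]
        push_cast
        ring
    have hcrit := hlocmin.hasDerivAt_eq_zero hderiv
    -- entry computations
    have hLE : ∀ (i : n₁) (j : r), (L * E) i j = if j = b then L i a else 0 := by
      intro i j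
      by_cases hj : j = b
      · simp [hj, hE, Matrix.mul_apply, Matrix.single, Matrix.of_apply,
          Finset.sum_ite_eq]
      · simp [hj, hE, Matrix.mul_apply, Matrix.single, Matrix.of_apply,
          (Ne.symm hj : b ≠ j)]
    have hQE : ∀ p q, (Q⁻¹ * E) p q = if q = b then Q⁻¹ p a else 0 := by
      intro p q
      by_cases hq : q = b
      · simp [hq, hE, Matrix.mul_apply, Matrix.single, Matrix.of_apply,
          Finset.sum_ite_eq]
      · simp [hq, hE, Matrix.mul_apply, Matrix.single, Matrix.of_apply,
          (Ne.symm hq : b ≠ q)]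
    have hN'e : ∀ p k, N' p k = -(Q⁻¹ p a * Q⁻¹ b k) := by
      intro p k
      have : (Q⁻¹ * E * Q⁻¹) p k = Q⁻¹ p a * Q⁻¹ b k := by
        rw [Matrix.mul_apply]
        rw [Finset.sum_eq_single b]
        · simp [hQE]
        · intro q _ hq; simp [hQE, hq]
        · intro h; exact absurd (Finset.mem_univ b) h
      simp [hN', Matrix.neg_apply, this]
    have hV : ∀ (i : n₂) (j : r),
        (R * N'ᵀ) i j = -(Q⁻¹ j a * (R * (Q⁻¹)ᵀ) i b) := by
      intro i j
      rw [Matrix.mul_apply, Matrix.mul_apply, Finset.mul_sum, ← Finset.sum_neg_distrib]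
      apply Finset.sum_congr rfl
      intro k _
      simp only [Matrix.transpose_apply, hN'e]
      ring
    have hterm1 : (∑ i, ∑ j, 2 * (((L * Q - Ls) * Matrix.diagonal g) i j) *
          (((L * E) * Matrix.diagonal g) i j))
        = 2 * ((Lᵀ * (L * Q - Ls) * Matrix.diagonal (fun i => g i ^ 2)) a b) := by
      have hR : (Lᵀ * (L * Q - Ls) * Matrix.diagonal (fun i => g i ^ 2)) a b
          = (∑ i, L i a * (L * Q - Ls) i b) * g b ^ 2 := by
        rw [Matrix.mul_diagonal, Matrix.mul_apply]
        simp [Matrix.transpose_apply]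
      rw [hR]
      calc ∑ i, ∑ j, 2 * (((L * Q - Ls) * Matrix.diagonal g) i j) *
              (((L * E) * Matrix.diagonal g) i j)
          = ∑ i, 2 * ((L * Q - Ls) i b * g b) * (L i a * g b) := by
            apply Finset.sum_congr rfl; intro i _
            rw [Finset.sum_eq_single b]
            · simp [Matrix.mul_diagonal, hLE]
            · intro j _ hj; simp [Matrix.mul_diagonal, hLE, hj]
            · intro h; exact absurd (Finset.mem_univ b) h
        _ = 2 * ((∑ i, L i a * (L * Q - Ls) i b) * g b ^ 2) := by
            simp only [Finset.mul_sum, Finset.sum_mul]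
            exact Finset.sum_congr rfl fun i _ => by ring
    have hterm2 : (∑ i, ∑ j, 2 * (((R * (Q⁻¹)ᵀ - Rs) * Matrix.diagonal g) i j) *
          (((R * N'ᵀ) * Matrix.diagonal g) i j))
        = -2 * (((Q⁻¹)ᵀ * (Matrix.diagonal (fun i => g i ^ 2) * (R * (Q⁻¹)ᵀ - Rs)ᵀ *
            (R * (Q⁻¹)ᵀ))) a b) := by
      have hR : ((Q⁻¹)ᵀ * (Matrix.diagonal (fun i => g i ^ 2) * (R * (Q⁻¹)ᵀ - Rs)ᵀ *
            (R * (Q⁻¹)ᵀ))) a b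
          = ∑ j, Q⁻¹ j a * ∑ i, g j ^ 2 * ((R * (Q⁻¹)ᵀ - Rs) i j * (R * (Q⁻¹)ᵀ) i b) := by
        rw [Matrix.mul_apply]
        apply Finset.sum_congr rfl
        intro j _
        rw [Matrix.transpose_apply, Matrix.mul_apply, Finset.mul_sum, Finset.mul_sum]
        apply Finset.sum_congr rfl
        intro i _
        rw [Matrix.diagonal_mul, Matrix.transpose_apply]
        ring
      rw [hR, Finset.sum_comm, neg_mul, Finset.mul_sum, ← Finset.sum_neg_distrib]
      apply Finset.sum_congr rfl
      intro j _
      rw [Finset.mul_sum, Finset.mul_sum, ← Finset.sum_neg_distrib]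
      apply Finset.sum_congr rfl
      intro i _
      rw [Matrix.mul_diagonal, Matrix.mul_diagonal, hV]
      ring
    rw [hterm1, hterm2] at hcrit
    linarith
  -- conclude from hC
  have hdu : IsUnit Q.det := (Matrix.isUnit_iff_isUnit_det Q).mp hQ
  have hQQ : Qᵀ * (Q⁻¹)ᵀ = 1 := by
    rw [← Matrix.transpose_mul, Matrix.nonsing_inv_mul Q hdu, Matrix.transpose_one]
  calc (L * Q)ᵀ * (L * Q - Ls) * Matrix.diagonal (fun i => g i ^ 2)
      = Qᵀ * (Lᵀ * (L * Q - Ls) * Matrix.diagonal (fun i => g i ^ 2)) := by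
        simp only [Matrix.transpose_mul, Matrix.mul_assoc]
    _ = Qᵀ * ((Q⁻¹)ᵀ * (Matrix.diagonal (fun i => g i ^ 2) * (R * (Q⁻¹)ᵀ - Rs)ᵀ *
          (R * (Q⁻¹)ᵀ))) := by rw [hC]
    _ = Matrix.diagonal (fun i => g i ^ 2) * (R * (Q⁻¹)ᵀ - Rs)ᵀ * (R * (Q⁻¹)ᵀ) := by
        rw [← Matrix.mul_assoc, hQQ, Matrix.one_mul]
end
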